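/- Let n > 1, let λ = (λ_1,…,λ_n) ∈ ℤ^n and μ = (μ_1,…,μ_{n−1}) ∈ ℤ^{n−1} be dominant with λ interlacing μ (λ_1 ≥ μ_1 ≥ λ_2 ≥ μ_2 ≥ … ≥ μ_{n−1} ≥ λ_n). For a Gel'fand–Tsetlin pattern M of type μ, let M[λ] denote the pattern of type λ obtained by appending λ as a new top row, and let H(μ) be the pattern of type μ whose j-th row is the initial segment (μ_1,…,μ_j) of μ. Then r(M[λ]) = r(H(μ)[λ]) · r(M). -/
import Mathlib


/-- `λ` is dominant: `λ_1 ≥ λ_2 ≥ … ≥ λ_n` (1-indexed). -/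
def IsDominant (n : ℕ) (lam : ℕ → ℤ) : Prop :=
  ∀ i : ℕ, 1 ≤ i → i < n → lam (i + 1) ≤ lam i

/-- `M = (m_{i,j})_{1 ≤ i ≤ j ≤ n}` is a Gel'fand–Tsetlin pattern of type `λ`:
the top row is `λ` and the rows interlace:  `m_{i,j+1} ≥ m_{i,j} ≥ m_{i+1,j+1}`. -/
def IsGTPattern (n : ℕ) (lam : ℕ → ℤ) (m : ℕ → ℕ → ℤ) : Prop :=
  (∀ i : ℕ, 1 ≤ i → i ≤ n → m i n = lam i) ∧
  (∀ i j : ℕ, 1 ≤ i → i ≤ j → j + 1 ≤ n → m i j ≤ m i (j + 1) ∧ m (i + 1) (j + 1) ≤ m i j)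

/-- The `j`-th component of the weight `γ^M` of a triangular array. -/
def gtWeight (m : ℕ → ℕ → ℤ) (j : ℕ) : ℤ :=
  (∑ i ∈ Finset.Icc 1 j, m i j) - ∑ i ∈ Finset.Icc 1 (j - 1), m i (j - 1)

/-- `q(M) = Σ_{1 ≤ i ≤ j ≤ n-1} m_{i,j}`. -/
def gtQ (n : ℕ) (m : ℕ → ℕ → ℤ) : ℤ :=
  ∑ j ∈ Finset.Icc 1 (n - 1), ∑ i ∈ Finset.Icc 1 j, m i j

/-- The dual triangular array `M^∨`, with `m^∨_{i,j} = -m_{j+1-i,j}`. -/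
def gtDual (m : ℕ → ℕ → ℤ) : ℕ → ℕ → ℤ := fun i j => - m (j + 1 - i) j

/-- Factorial of an integer (arguments are nonnegative in all uses). -/
def ifact (a : ℤ) : ℚ := (Nat.factorial a.toNat : ℚ)

/-- The rational constant `r(M)`. -/
def gtR (n : ℕ) (m : ℕ → ℕ → ℤ) : ℚ :=
  ∏ k ∈ Finset.Icc 1 n, ∏ j ∈ Finset.Icc 1 (k - 1), ∏ i ∈ Finset.Icc 1 j,
    (ifact (m i k - m j (k - 1) - (i : ℤ) + (j : ℤ)) *
        ifact (m i (k - 1) - m (j + 1) k - (i : ℤ) + (j : ℤ))) /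
      (ifact (m i (k - 1) - m j (k - 1) - (i : ℤ) + (j : ℤ)) *
        ifact (m i k - m (j + 1) k - (i : ℤ) + (j : ℤ)))

/-- `M[λ]`: append `λ` as a new top (`n`-th) row to a triangular array of size `n-1`. -/
def appendTop (n : ℕ) (lam : ℕ → ℤ) (m : ℕ → ℕ → ℤ) : ℕ → ℕ → ℤ :=
  fun i j => if j = n then lam i else m i j

lemma ifact_ne_zero (a : ℤ) : ifact a ≠ 0 := by
  simp [ifact, Nat.factorial_ne_zero]

/-- For `λ` interlacing `μ` and any Gel'fand–Tsetlin pattern `M` of type `μ`,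
`r(M[λ]) = r(H(μ)[λ]) · r(M)`; here `H(μ)` is the pattern of type `μ` all of whose rows
are initial segments of `μ`. -/
theorem statement4 (n : ℕ) (hn : 1 < n) (lam mu : ℕ → ℤ)
    (hlam : IsDominant n lam) (hmu : IsDominant (n - 1) mu)
    (hinter : ∀ i : ℕ, 1 ≤ i → i ≤ n - 1 → mu i ≤ lam i ∧ lam (i + 1) ≤ mu i)
    (m : ℕ → ℕ → ℤ) (hM : IsGTPattern (n - 1) mu m) :
    gtR n (appendTop n lam m) =
      gtR n (appendTop n lam (fun i _ => mu i)) * gtR (n - 1) m := by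
  obtain ⟨N, rfl⟩ : ∃ N, n = N + 2 := ⟨n - 2, by omega⟩
  obtain ⟨htop, -⟩ := hM
  have htop' : ∀ i, 1 ≤ i → i ≤ N + 1 → m i (N + 1) = mu i := htop
  unfold gtR
  rw [show N + 2 = (N + 1) + 1 from rfl,
    Finset.prod_Icc_succ_top (by omega : 1 ≤ N + 1 + 1),
    Finset.prod_Icc_succ_top (by omega : 1 ≤ N + 1 + 1)]
  have hP1 : (∏ k ∈ Finset.Icc 1 (N + 1), ∏ j ∈ Finset.Icc 1 (k - 1), ∏ i ∈ Finset.Icc 1 j,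
      (ifact (appendTop (N + 1 + 1) lam m i k - appendTop (N + 1 + 1) lam m j (k - 1) - (i : ℤ) + (j : ℤ)) *
          ifact (appendTop (N + 1 + 1) lam m i (k - 1) - appendTop (N + 1 + 1) lam m (j + 1) k - (i : ℤ) + (j : ℤ))) /
        (ifact (appendTop (N + 1 + 1) lam m i (k - 1) - appendTop (N + 1 + 1) lam m j (k - 1) - (i : ℤ) + (j : ℤ)) *
          ifact (appendTop (N + 1 + 1) lam m i k - appendTop (N + 1 + 1) lam m (j + 1) k - (i : ℤ) + (j : ℤ)))) =
      ∏ k ∈ Finset.Icc 1 (N + 2 - 1), ∏ j ∈ Finset.Icc 1 (k - 1), ∏ i ∈ Finset.Icc 1 j,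
      (ifact (m i k - m j (k - 1) - (i : ℤ) + (j : ℤ)) *
          ifact (m i (k - 1) - m (j + 1) k - (i : ℤ) + (j : ℤ))) /
        (ifact (m i (k - 1) - m j (k - 1) - (i : ℤ) + (j : ℤ)) *
          ifact (m i k - m (j + 1) k - (i : ℤ) + (j : ℤ))) := by
    apply Finset.prod_congr rfl
    intro k hk
    simp only [Finset.mem_Icc] at hk
    have h1 : k ≠ N + 1 + 1 := by omega
    have h2 : k - 1 ≠ N + 1 + 1 := by omega
    simp [appendTop, h1, h2]
  have hP2 : (∏ k ∈ Finset.Icc 1 (N + 1), ∏ j ∈ Finset.Icc 1 (k - 1), ∏ i ∈ Finset.Icc 1 j,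
      (ifact (appendTop (N + 1 + 1) lam (fun i _ => mu i) i k - appendTop (N + 1 + 1) lam (fun i _ => mu i) j (k - 1) - (i : ℤ) + (j : ℤ)) *
          ifact (appendTop (N + 1 + 1) lam (fun i _ => mu i) i (k - 1) - appendTop (N + 1 + 1) lam (fun i _ => mu i) (j + 1) k - (i : ℤ) + (j : ℤ))) /
        (ifact (appendTop (N + 1 + 1) lam (fun i _ => mu i) i (k - 1) - appendTop (N + 1 + 1) lam (fun i _ => mu i) j (k - 1) - (i : ℤ) + (j : ℤ)) *
          ifact (appendTop (N + 1 + 1) lam (fun i _ => mu i) i k - appendTop (N + 1 + 1) lam (fun i _ => mu i) (j + 1) k - (i : ℤ) + (j : ℤ)))) = 1 := by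
    apply Finset.prod_eq_one
    intro k hk
    simp only [Finset.mem_Icc] at hk
    have h1 : k ≠ N + 1 + 1 := by omega
    have h2 : k - 1 ≠ N + 1 + 1 := by omega
    apply Finset.prod_eq_one
    intro j hj
    apply Finset.prod_eq_one
    intro i hi
    simp only [appendTop, if_neg h1, if_neg h2]
    exact div_self (mul_ne_zero (ifact_ne_zero _) (ifact_ne_zero _))
  have hQ : (∏ j ∈ Finset.Icc 1 (N + 1 + 1 - 1), ∏ i ∈ Finset.Icc 1 j,
      (ifact (appendTop (N + 1 + 1) lam m i (N + 1 + 1) - appendTop (N + 1 + 1) lam m j (N + 1 + 1 - 1) - (i : ℤ) + (j : ℤ)) *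
          ifact (appendTop (N + 1 + 1) lam m i (N + 1 + 1 - 1) - appendTop (N + 1 + 1) lam m (j + 1) (N + 1 + 1) - (i : ℤ) + (j : ℤ))) /
        (ifact (appendTop (N + 1 + 1) lam m i (N + 1 + 1 - 1) - appendTop (N + 1 + 1) lam m j (N + 1 + 1 - 1) - (i : ℤ) + (j : ℤ)) *
          ifact (appendTop (N + 1 + 1) lam m i (N + 1 + 1) - appendTop (N + 1 + 1) lam m (j + 1) (N + 1 + 1) - (i : ℤ) + (j : ℤ)))) =
      ∏ j ∈ Finset.Icc 1 (N + 1 + 1 - 1), ∏ i ∈ Finset.Icc 1 j,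
      (ifact (appendTop (N + 1 + 1) lam (fun i _ => mu i) i (N + 1 + 1) - appendTop (N + 1 + 1) lam (fun i _ => mu i) j (N + 1 + 1 - 1) - (i : ℤ) + (j : ℤ)) *
          ifact (appendTop (N + 1 + 1) lam (fun i _ => mu i) i (N + 1 + 1 - 1) - appendTop (N + 1 + 1) lam (fun i _ => mu i) (j + 1) (N + 1 + 1) - (i : ℤ) + (j : ℤ))) /
        (ifact (appendTop (N + 1 + 1) lam (fun i _ => mu i) i (N + 1 + 1 - 1) - appendTop (N + 1 + 1) lam (fun i _ => mu i) j (N + 1 + 1 - 1) - (i : ℤ) + (j : ℤ)) *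
          ifact (appendTop (N + 1 + 1) lam (fun i _ => mu i) i (N + 1 + 1) - appendTop (N + 1 + 1) lam (fun i _ => mu i) (j + 1) (N + 1 + 1) - (i : ℤ) + (j : ℤ))) := by
    apply Finset.prod_congr rfl
    intro j hj
    simp only [Finset.mem_Icc] at hj
    apply Finset.prod_congr rfl
    intro i hi
    simp only [Finset.mem_Icc] at hi
    have hne : ¬ (N + 1 = N + 1 + 1) := by omega
    simp only [appendTop, show N + 1 + 1 - 1 = N + 1 from rfl, if_pos rfl, if_neg hne,
      htop' i hi.1 (by omega), htop' j hj.1 (by omega)]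
    simp
  rw [hP1, hP2, hQ]
  ring
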